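/- arXiv:1607.01423 — 4 statements merged into one kernel-verified Lean document; each statement's English description precedes it below -/
import Mathlib

section
/- For each sequence x in c₀ which is not eventually zero, there exists an unbounded (not norm bounded) disjointness preserving linear functional φ on c₀ with φ(x) = 1. -/
/-! A free ultrafilter `U` on `ℕ` containing the (infinite) support of `x` turns the ultrapower
`ℝ^ℕ / U` into a field in which the class of `x` is nonzero; any linear functional on it
taking the value `1` there, composed with `c₀ → ℝ^ℕ / U`, does the job. It preserves
disjointness because disjoint sequences have product zero and the ultrapower has no zero
divisors. It is unbounded because it only sees the germ of a sequence at infinity, while `x`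
agrees at infinity with its own tails, whose sup norms tend to `0`. -/

/-- The space `c₀` of real sequences converging to `0`, as a submodule of `ℕ → ℝ`. -/
def czero : Submodule ℝ (ℕ → ℝ) where
  carrier := {x | Filter.Tendsto x Filter.atTop (nhds 0)}
  zero_mem' := tendsto_const_nhds
  add_mem' := by intro a b ha hb; have h := ha.add hb; simp only [add_zero] at h; exact h
  smul_mem' := by intro c x hx; have h := hx.const_smul c; simp only [smul_zero] at h; exact h

open Filter

theorem mul_eq_zero_of_abs_inf_abs_eq_zero {α : Type*} [Ring α] [LinearOrder α] [IsOrderedRing α]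
    {a b : α} (h : |a| ⊓ |b| = 0) : a * b = 0 := by
  rcases min_choice |a| |b| with hab | hab <;> rw [hab, abs_eq_zero] at h <;> simp [h]

theorem Filter.Frequently.exists_ultrafilter {α : Type*} {l : Filter α} {p : α → Prop}
    (h : ∃ᶠ a in l, p a) : ∃ U : Ultrafilter α, ↑U ≤ l ∧ ∀ᶠ a in (U : Filter α), p a := by
  have := frequently_iff_neBot.1 h
  obtain ⟨U, hU⟩ := exists_ultrafilter_le (l ⊓ 𝓟 {a | p a})
  exact ⟨U, hU.trans inf_le_left, hU (mem_inf_of_right (mem_principal_self _))⟩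

def Filter.Germ.coeLinearMap {α R M : Type*} [Semiring R] [AddCommMonoid M] [Module R M]
    (l : Filter α) : (α → M) →ₗ[R] l.Germ M where
  toFun := (↑)
  map_add' _ _ := rfl
  map_smul' _ _ := rfl

theorem Ultrafilter.map_germ_mul_map_germ_eq_zero {α K : Type*} [Field K] (U : Ultrafilter α)
    (f : (U : Filter α).Germ K →ₗ[K] K) {y z : α → K} (h : y * z = 0) :
    f ↑y * f ↑z = 0 := by
  have hgerm : (y : (U : Filter α).Germ K) * z = 0 := by
    rw [← Germ.coe_mul, h, Germ.coe_zero]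
  rcases mul_eq_zero.1 hgerm with h | h <;> simp [h]

namespace czero

theorem exists_eventuallyEq_iSup_abs_le (x : czero) {ε : ℝ} (hε : 0 < ε) :
    ∃ y : czero, (y : ℕ → ℝ) =ᶠ[atTop] x ∧ ⨆ n, |(y : ℕ → ℝ) n| ≤ ε := by
  obtain ⟨K, hK⟩ := Metric.tendsto_atTop.1 x.2 ε hε
  have htail : (Set.Ici K).indicator (x : ℕ → ℝ) =ᶠ[atTop] x :=
    (eventually_ge_atTop K).mono fun n hn => Set.indicator_of_mem hn _
  refine ⟨⟨_, (tendsto_congr' htail).2 x.2⟩, htail, ciSup_le fun n => ?_⟩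
  by_cases hn : K ≤ n
  · simpa [hn] using (hK n hn).le
  · simpa [hn] using hε.le

theorem not_exists_bound_of_factors_through_germ (φ : czero →ₗ[ℝ] ℝ)
    (hφ : ∀ y z : czero, (y : ℕ → ℝ) =ᶠ[atTop] z → φ y = φ z) {x : czero} (hx : φ x ≠ 0) :
    ¬∃ C : ℝ, ∀ y : czero, |φ y| ≤ C * ⨆ n, |(y : ℕ → ℝ) n| := by
  rintro ⟨C, hC⟩
  have hxpos : 0 < |φ x| := abs_pos.2 hx
  set ε := |φ x| / (|C| + 1)
  obtain ⟨y, hyx, hy⟩ := exists_eventuallyEq_iSup_abs_le x (ε := ε) (by positivity)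
  have hy0 : 0 ≤ ⨆ n, |(y : ℕ → ℝ) n| := Real.iSup_nonneg fun n => abs_nonneg _
  have hεC : |C| * ε < |φ x| := by
    rw [mul_div_assoc', div_lt_iff₀ (by positivity)]
    linarith
  refine lt_irrefl |φ x| ?_
  calc |φ x| = |φ y| := by rw [hφ y x hyx]
    _ ≤ C * ⨆ n, |(y : ℕ → ℝ) n| := hC y
    _ ≤ |C| * ε :=
      (mul_le_mul_of_nonneg_right (le_abs_self C) hy0).trans
        (mul_le_mul_of_nonneg_left hy (abs_nonneg C))
    _ < |φ x| := hεC

end czero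

/-- For each `x ∈ c₀` which is not eventually zero, there is a norm-unbounded disjointness
preserving linear functional `φ` on `c₀` with `φ x = 1`. -/
theorem exists_unbounded_disjointness_preserving_functional_on_c0
    (x : czero) (hx : ¬∀ᶠ n in Filter.atTop, (x : ℕ → ℝ) n = 0) :
    ∃ φ : czero →ₗ[ℝ] ℝ,
      (∀ y z : czero, (∀ n : ℕ, |(y : ℕ → ℝ) n| ⊓ |(z : ℕ → ℝ) n| = 0) → φ y * φ z = 0) ∧
      (¬∃ C : ℝ, ∀ y : czero, |φ y| ≤ C * ⨆ n : ℕ, |(y : ℕ → ℝ) n|) ∧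
      φ x = 1 := by
  obtain ⟨U, hU, hxU⟩ := (not_eventually.1 hx).exists_ultrafilter
  have hx0 : ((x : ℕ → ℝ) : (U : Filter ℕ).Germ ℝ) ≠ 0 := fun h =>
    (hxU.and (Germ.coe_eq.1 h)).exists.elim fun _ hn => hn.1 hn.2
  obtain ⟨f, hf⟩ := Module.Projective.exists_dual_eq_one ℝ hx0
  let φ : czero →ₗ[ℝ] ℝ := f ∘ₗ Germ.coeLinearMap (U : Filter ℕ) ∘ₗ czero.subtype
  have hφ : ∀ y z : czero, (y : ℕ → ℝ) =ᶠ[atTop] z → φ y = φ z := fun y z h =>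
    congrArg f (Germ.coe_eq.2 (h.filter_mono hU))
  refine ⟨φ, fun y z hyz => ?_, czero.not_exists_bound_of_factors_through_germ φ hφ
    (x := x) (hf.trans_ne one_ne_zero), hf⟩
  exact U.map_germ_mul_map_germ_eq_zero f
    (funext fun n => mul_eq_zero_of_abs_inf_abs_eq_zero (hyz n))
end

section
/- Let E and F be Banach lattices and T : E → F a disjointness preserving linear operator. If u = v + w with |v| ∧ |w| = 0, then ‖T(v)‖ ≤ ‖T(u)‖. -/
/-!
Disjointness of `v` and `w` passes to `Tv` and `Tw`. In a lattice-ordered group the Riesz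
inequality `a ⊓ (b + c) ≤ a ⊓ b + a ⊓ c` (for `a, b, c ≥ 0`) shows that a summand of a
disjoint sum is dominated in modulus by the sum, so `|Tv| ≤ |Tv + Tw| = |Tu|`, and the norm is solid.
-/

section LatticeOrderedGroup

variable {α : Type*} [Lattice α] [AddCommGroup α] [AddLeftMono α]

theorem inf_add_le_inf_add_inf {a b c : α} (ha : 0 ≤ a) (hb : 0 ≤ b) (hc : 0 ≤ c) :
    a ⊓ (b + c) ≤ a ⊓ b + a ⊓ c := by
  -- the right side is `(a + a) ⊓ (a + c) ⊓ ((b + a) ⊓ (b + c))`, each term of which dominates the left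
  rw [inf_add, add_inf, add_inf]
  refine le_inf (le_inf ?_ ?_) (le_inf ?_ inf_le_right)
  · exact inf_le_left.trans (le_add_of_nonneg_left ha)
  · exact inf_le_left.trans (le_add_of_nonneg_right hc)
  · exact inf_le_left.trans (le_add_of_nonneg_left hb)

theorem abs_le_abs_add_of_abs_inf_abs_eq_zero {a b : α} (hab : |a| ⊓ |b| = 0) :
    |a| ≤ |a + b| := by
  have hle : |a| ≤ |a + b| + |b| := by
    simpa using abs_add_le (a + b) (-b)
  calc |a| = |a| ⊓ (|a + b| + |b|) := (inf_eq_left.2 hle).symm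
    _ ≤ |a| ⊓ |a + b| + |a| ⊓ |b| :=
      inf_add_le_inf_add_inf (abs_nonneg a) (abs_nonneg _) (abs_nonneg b)
    _ = |a| ⊓ |a + b| := by rw [hab, add_zero]
    _ ≤ |a + b| := inf_le_right

end LatticeOrderedGroup

variable {E F : Type*}
  [NormedAddCommGroup E] [Lattice E] [HasSolidNorm E] [IsOrderedAddMonoid E] [NormedSpace ℝ E] [CompleteSpace E]
  [NormedAddCommGroup F] [Lattice F] [HasSolidNorm F] [IsOrderedAddMonoid F] [NormedSpace ℝ F] [CompleteSpace F]

/-- If `T` is disjointness preserving and `u = v + w` with `v ⊥ w`, then `‖Tv‖ ≤ ‖Tu‖`. -/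
theorem norm_le_of_disjoint_summand (T : E →ₗ[ℝ] F)
    (hdp : ∀ x y : E, |x| ⊓ |y| = 0 → |T x| ⊓ |T y| = 0)
    (u v w : E) (huvw : u = v + w) (hvw : |v| ⊓ |w| = 0) :
    ‖T v‖ ≤ ‖T u‖ := by
  rw [huvw, map_add]
  exact norm_le_norm_of_abs_le_abs (abs_le_abs_add_of_abs_inf_abs_eq_zero (hdp v w hvw))
end

section
/- Let E and F be Banach lattices and T : E → F a disjointness preserving linear operator (not assumed continuous). Then for every sequence (u_n) of pairwise disjoint elements of E there exists a constant C such that ‖T(u_n)‖ ≤ C‖u_n‖ for all n. -/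
/-!
If the ratios `‖T u n‖ / ‖u n‖` were unbounded, a subsequence rescaled to norms `2⁻ᵏ` would give
disjoint `w k` with `‖T (w k)‖ > 2 ^ k` and a sum `v = ∑ w k` in `E`. Since the disjoint complement
of `w k` is a closed subgroup, it contains `v - w k`; so `T (w k)` is disjoint from `T v - T (w k)`,
whence `|T (w k)| ≤ |T v|` and `‖T (w k)‖ ≤ ‖T v‖` for every `k`, a contradiction.

Rescaling preserves disjointness because multiplication by a real `c ≥ 0` is monotone in a normed
lattice: for rational `c` this follows from `0 ≤ n • a → 0 ≤ a`, and the positive cone is closed.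
-/

section LatticeOrderedGroup

variable {α : Type*} [Lattice α] [AddCommGroup α] [IsOrderedAddMonoid α] {a b c : α}

lemma add_inf_le_inf_add_inf (ha : 0 ≤ a) (hb : 0 ≤ b) (hc : 0 ≤ c) :
    (a + b) ⊓ c ≤ a ⊓ c + b ⊓ c := by
  rw [add_inf, inf_add, inf_add]
  exact le_inf (le_inf inf_le_left (inf_le_right.trans (le_add_of_nonneg_right hb)))
    (le_inf (inf_le_right.trans (le_add_of_nonneg_left ha))
      (inf_le_right.trans (le_add_of_nonneg_left hc)))

lemma nsmul_inf_eq_zero (ha : 0 ≤ a) (hc : 0 ≤ c) (h : a ⊓ c = 0) (n : ℕ) : (n • a) ⊓ c = 0 := by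
  induction n with
  | zero => simpa using inf_eq_left.mpr hc
  | succ n ih =>
    refine le_antisymm ?_ (le_inf (nsmul_nonneg ha _) hc)
    calc ((n + 1) • a) ⊓ c ≤ (n • a) ⊓ c + a ⊓ c := by
          rw [succ_nsmul]; exact add_inf_le_inf_add_inf (nsmul_nonneg ha n) ha hc
      _ = 0 := by rw [ih, h, add_zero]

lemma nonneg_of_nsmul_nonneg {n : ℕ} (hn : n ≠ 0) (h : 0 ≤ n • a) : 0 ≤ a := by
  have hdisj : (n • a⁻) ⊓ (n • a⁺) = 0 := by
    refine nsmul_inf_eq_zero (negPart_nonneg a) (nsmul_nonneg (posPart_nonneg a) n) ?_ n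
    rw [inf_comm]
    exact nsmul_inf_eq_zero (posPart_nonneg a) (negPart_nonneg a) (posPart_inf_negPart_eq_zero a) n
  have hle : n • a⁻ ≤ n • a⁺ := by
    rwa [← posPart_sub_negPart a, nsmul_sub, sub_nonneg] at h
  have hzero : n • a⁻ = 0 := by rwa [inf_eq_left.mpr hle] at hdisj
  rw [← negPart_eq_zero]
  exact le_antisymm (hzero ▸ le_self_nsmul (negPart_nonneg a) hn) (negPart_nonneg a)

lemma ratCast_smul_nonneg {𝕜 : Type*} [DivisionRing 𝕜] [CharZero 𝕜] [Module 𝕜 α] {q : ℚ}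
    (hq : 0 ≤ q) (ha : 0 ≤ a) : 0 ≤ (q : 𝕜) • a := by
  refine nonneg_of_nsmul_nonneg q.den_nz ?_
  have hnum : (q.den : 𝕜) * (q : 𝕜) = (q.num.toNat : 𝕜) := by
    have h := congrArg (Rat.cast (K := 𝕜)) q.den_mul_eq_num
    push_cast at h
    rw [h]
    exact_mod_cast (Int.toNat_of_nonneg (Rat.num_nonneg.mpr hq)).symm
  rw [← Nat.cast_smul_eq_nsmul 𝕜, smul_smul, hnum, Nat.cast_smul_eq_nsmul]
  exact nsmul_nonneg ha _

lemma abs_le_abs_add_of_inf_eq_zero (h : |a| ⊓ |b| = 0) : |a| ≤ |a + b| := by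
  have hsup : |a| ⊔ |b| = |(|b| - |a|)| := by
    rw [← sup_sub_inf_eq_abs_sub, h, sub_zero]
  have hle : |(|b| - |a|)| ≤ |a + b| := by
    simpa [abs_neg, sub_neg_eq_add, add_comm b a] using abs_abs_sub_abs_le b (-a)
  exact le_sup_left.trans (hsup ▸ hle)

def disjointComplement (c : α) : AddSubgroup α where
  carrier := {x | |x| ⊓ |c| = 0}
  zero_mem' := by simp
  add_mem' {x y} hx hy := by
    refine le_antisymm ?_ (le_inf (abs_nonneg _) (abs_nonneg _))
    calc |x + y| ⊓ |c| ≤ (|x| + |y|) ⊓ |c| := inf_le_inf_right _ (abs_add_le x y)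
      _ ≤ |x| ⊓ |c| + |y| ⊓ |c| :=
          add_inf_le_inf_add_inf (abs_nonneg x) (abs_nonneg y) (abs_nonneg c)
      _ = 0 := by rw [hx, hy, add_zero]
  neg_mem' {x} hx := by simpa using hx

lemma mem_disjointComplement {x : α} : x ∈ disjointComplement c ↔ |x| ⊓ |c| = 0 := Iff.rfl

end LatticeOrderedGroup

section LatticeModule

variable {𝕜 M : Type*} [Field 𝕜] [LinearOrder 𝕜] [IsStrictOrderedRing 𝕜]
  [Lattice M] [AddCommGroup M] [Module 𝕜 M] [PosSMulMono 𝕜 M]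

lemma abs_smul_of_pos {c : 𝕜} (hc : 0 < c) (a : M) : |c • a| = c • |a| := by
  change c • a ⊔ -(c • a) = c • (a ⊔ -a)
  rw [← smul_neg]
  exact ((OrderIso.smulRight hc).map_sup a (-a)).symm

lemma abs_smul_inf_abs_smul_eq_zero [IsOrderedAddMonoid M] {c d : 𝕜} (hc : 0 < c) (hd : 0 < d)
    {a b : M} (h : |a| ⊓ |b| = 0) : |c • a| ⊓ |d • b| = 0 := by
  refine le_antisymm ?_ (le_inf (abs_nonneg _) (abs_nonneg _))
  have he : 0 < max c d := lt_max_of_lt_left hc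
  calc |c • a| ⊓ |d • b| = c • |a| ⊓ d • |b| := by rw [abs_smul_of_pos hc, abs_smul_of_pos hd]
    _ ≤ max c d • |a| ⊓ max c d • |b| :=
        inf_le_inf (smul_le_smul_of_nonneg_right (le_max_left c d) (abs_nonneg a))
          (smul_le_smul_of_nonneg_right (le_max_right c d) (abs_nonneg b))
    _ = max c d • (|a| ⊓ |b|) := ((OrderIso.smulRight he).map_inf _ _).symm
    _ = 0 := by rw [h, smul_zero]

end LatticeModule

section NormedLattice

variable {α : Type*} [NormedAddCommGroup α] [Lattice α] [HasSolidNorm α] [IsOrderedAddMonoid α]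

lemma isClosed_disjointComplement (c : α) : IsClosed (disjointComplement c : Set α) :=
  isClosed_eq ((continuous_id.sup continuous_neg).inf continuous_const) continuous_const

instance HasSolidNorm.toPosSMulMono [NormedSpace ℝ α] : PosSMulMono ℝ α :=
  PosSMulMono.of_smul_nonneg fun c hc a ha => by
    -- truncating at `0` makes the closed condition hold at every rational, so density applies
    have hmax : ∀ t : ℝ, 0 ≤ max t 0 • a := fun t =>
      Rat.denseRange_cast.induction_on t
        (isClosed_nonneg.preimage ((continuous_id.max continuous_const).smul continuous_const))
        fun q => by
          rcases le_total q 0 with hq | hq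
          · simp [max_eq_right (Rat.cast_nonpos.mpr hq)]
          · rw [max_eq_left (Rat.cast_nonneg.mpr hq)]
            exact ratCast_smul_nonneg hq ha
    simpa [max_eq_left hc] using hmax c

end NormedLattice

section DisjointnessPreserving

variable {E F : Type*} [NormedAddCommGroup E] [Lattice E] [HasSolidNorm E] [IsOrderedAddMonoid E]
  [NormedAddCommGroup F] [Lattice F] [HasSolidNorm F] [IsOrderedAddMonoid F]
  {G : Type*} [FunLike G E F] [AddMonoidHomClass G E F]

theorem norm_apply_le_norm_apply_of_hasSum (T : G)
    (hT : ∀ x y : E, |x| ⊓ |y| = 0 → |T x| ⊓ |T y| = 0) {ι : Type*} {w : ι → E}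
    (hw : Pairwise fun i j => |w i| ⊓ |w j| = 0) {v : E} (hv : HasSum w v) (i : ι) :
    ‖T (w i)‖ ≤ ‖T v‖ := by
  classical
  have hrest : v - w i ∈ disjointComplement (w i) := by
    have hsum : HasSum (Function.update w i 0) (v - w i) := by
      simpa [sub_eq_neg_add, add_comm] using hv.update i 0
    rw [← hsum.tsum_eq]
    refine tsum_mem (isClosed_disjointComplement (w i)) fun j => ?_
    rcases eq_or_ne j i with rfl | hji
    · rw [Function.update_self]
      exact zero_mem _
    · rw [Function.update_of_ne hji]
      exact mem_disjointComplement.2 (hw hji)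
  have habs : |T (w i)| ≤ |T v| := by
    have := abs_le_abs_add_of_inf_eq_zero
      (hT (w i) (v - w i) (by rw [inf_comm]; exact mem_disjointComplement.1 hrest))
    rwa [← map_add, add_sub_cancel] at this
  exact norm_le_norm_of_abs_le_abs habs

theorem bddAbove_norm_apply_of_summable (T : G)
    (hT : ∀ x y : E, |x| ⊓ |y| = 0 → |T x| ⊓ |T y| = 0) {ι : Type*} {w : ι → E}
    (hw : Pairwise fun i j => |w i| ⊓ |w j| = 0) (hs : Summable w) :
    BddAbove (Set.range fun i => ‖T (w i)‖) :=
  ⟨‖T (∑' i, w i)‖, by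
    rintro _ ⟨i, rfl⟩
    exact norm_apply_le_norm_apply_of_hasSum T hT hw hs.hasSum i⟩

end DisjointnessPreserving

lemma exists_strictMono_lt_of_not_bddAbove {β : Type*} [LinearOrder β] {f : ℕ → β}
    (hf : ¬BddAbove (Set.range f)) (g : ℕ → β) :
    ∃ φ : ℕ → ℕ, StrictMono φ ∧ ∀ k, g k < f (φ k) := by
  refine Filter.extraction_forall_of_frequently (P := fun k n => g k < f n) fun k => ?_
  rw [Filter.frequently_atTop]
  by_contra! h
  exact hf (Filter.IsBoundedUnder.bddAbove_range
    ⟨g k, Filter.eventually_map.2 (Filter.eventually_atTop.2 h)⟩)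

section Rescaling

variable {E F : Type*} [NormedAddCommGroup E] [NormedSpace ℝ E]
  [SeminormedAddCommGroup F] [NormedSpace ℝ F]

lemma exists_norm_le_mul_norm_of_bddAbove (T : E →ₗ[ℝ] F) {ι : Type*} {x : ι → E}
    (hb : BddAbove (Set.range fun i => ‖T (x i)‖ / ‖x i‖)) :
    ∃ C : ℝ, ∀ i, ‖T (x i)‖ ≤ C * ‖x i‖ := by
  obtain ⟨C, hC⟩ := hb
  refine ⟨C, fun i => ?_⟩
  rcases eq_or_ne (x i) 0 with h0 | h0
  · simp [h0]
  · exact (div_le_iff₀ (norm_pos_iff.2 h0)).1 (hC ⟨i, rfl⟩)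

lemma exists_summable_smul_not_bddAbove [CompleteSpace E] (T : E →ₗ[ℝ] F) {x : ℕ → E}
    (hx : ¬BddAbove (Set.range fun n => ‖T (x n)‖ / ‖x n‖)) :
    ∃ φ : ℕ → ℕ, StrictMono φ ∧ ∃ c : ℕ → ℝ, (∀ k, 0 < c k) ∧
      Summable (fun k => c k • x (φ k)) ∧ ¬BddAbove (Set.range fun k => ‖T (c k • x (φ k))‖) := by
  obtain ⟨φ, hφ, hφx⟩ := exists_strictMono_lt_of_not_bddAbove hx fun k => (4 : ℝ) ^ k
  have hpos : ∀ k, 0 < ‖x (φ k)‖ := fun k => by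
    by_contra! h
    have h0 : ‖T (x (φ k))‖ / ‖x (φ k)‖ = 0 := by simp [le_antisymm h (norm_nonneg _)]
    linarith [hφx k, pow_pos (by norm_num : (0 : ℝ) < 4) k]
  set c : ℕ → ℝ := fun k => (2 ^ k * ‖x (φ k)‖)⁻¹
  have hc : ∀ k, 0 < c k := fun k => inv_pos.2 (mul_pos (pow_pos two_pos k) (hpos k))
  have hnorm : ∀ k, ‖c k • x (φ k)‖ = (1 / 2) ^ k := fun k => by
    have := (hpos k).ne'
    simp only [c, norm_smul, norm_inv, norm_mul, norm_pow, Real.norm_ofNat, norm_norm]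
    field_simp
    rw [← mul_pow]
    norm_num
  have hTnorm : ∀ k, (2 : ℝ) ^ k < ‖T (c k • x (φ k))‖ := fun k => by
    have hk : (4 : ℝ) ^ k * ‖x (φ k)‖ < ‖T (x (φ k))‖ := (lt_div_iff₀ (hpos k)).1 (hφx k)
    rw [map_smul, norm_smul, Real.norm_of_nonneg (hc k).le,
      lt_inv_mul_iff₀ (mul_pos (pow_pos two_pos k) (hpos k))]
    calc 2 ^ k * ‖x (φ k)‖ * 2 ^ k = (4 : ℝ) ^ k * ‖x (φ k)‖ := by
          rw [show (4 : ℝ) = 2 * 2 by norm_num, mul_pow]; ring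
      _ < ‖T (x (φ k))‖ := hk
  refine ⟨φ, hφ, c, hc, Summable.of_norm (by simpa [hnorm] using summable_geometric_two), ?_⟩
  rintro ⟨M, hM⟩
  obtain ⟨k, hk⟩ := pow_unbounded_of_one_lt M one_lt_two
  exact (hk.trans (hTnorm k)).not_ge (hM ⟨k, rfl⟩)

end Rescaling

variable {E F : Type*}
  [NormedAddCommGroup E] [Lattice E] [HasSolidNorm E] [IsOrderedAddMonoid E] [NormedSpace ℝ E] [CompleteSpace E]
  [NormedAddCommGroup F] [Lattice F] [HasSolidNorm F] [IsOrderedAddMonoid F] [NormedSpace ℝ F] [CompleteSpace F]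

/-- Main boundedness theorem: a disjointness preserving operator is uniformly bounded
on every pairwise disjoint sequence. -/
theorem main_boundedness (T : E →ₗ[ℝ] F)
    (hdp : ∀ x y : E, |x| ⊓ |y| = 0 → |T x| ⊓ |T y| = 0)
    (u : ℕ → E) (hdisj : Pairwise fun m n => |u m| ⊓ |u n| = 0) :
    ∃ C : ℝ, ∀ n : ℕ, ‖T (u n)‖ ≤ C * ‖u n‖ := by
  by_contra hC
  have hratio : ¬BddAbove (Set.range fun n => ‖T (u n)‖ / ‖u n‖) :=
    fun hb => hC (exists_norm_le_mul_norm_of_bddAbove T hb)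
  obtain ⟨φ, hφ, c, hc, hsum, hunbdd⟩ := exists_summable_smul_not_bddAbove T hratio
  refine hunbdd (bddAbove_norm_apply_of_summable T hdp (fun i j hij => ?_) hsum)
  exact abs_smul_inf_abs_smul_eq_zero (hc i) (hc j) (hdisj (hφ.injective.ne hij))
end

section
/- Let X be a compact Hausdorff space, F a Banach lattice, and T : C(X) → F a disjointness preserving linear operator. Then the singularity set of T is finite. -/
variable {X : Type*} [TopologicalSpace X] [CompactSpace X] [T2Space X]
  {F : Type*} [NormedAddCommGroup F] [Lattice F] [HasSolidNorm F] [IsOrderedAddMonoid F] [NormedSpace ℝ F] [CompleteSpace F]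

/-- The closed ideal of `C(X)` of functions vanishing off the open set `U`. -/
def KU (U : Set X) : Set C(X, ℝ) := {f : C(X, ℝ) | ∀ x ∉ U, f x = 0}

/-- The singularity set of `T`: the points `x` such that for every open neighborhood `U`
of `x`, the restriction of `T` to `K_U` is unbounded (discontinuous). -/
def SingSet (T : C(X, ℝ) →ₗ[ℝ] F) : Set X :=
  {x : X | ∀ U : Set X, IsOpen U → x ∈ U →
    ¬∃ C : ℝ, ∀ f ∈ KU U, ‖T f‖ ≤ C * ‖f‖}

/-!
If the singularity set were infinite, compactness would give an accumulation point of it and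
hence pairwise disjoint open sets `V n`, each containing a singular point. On `K_{V n}` the
operator is unbounded, so there are `g n ∈ K_{V n}` with `‖g n‖ ≤ 2⁻ⁿ` and `‖T (g n)‖ > n`.
Their sum `h` converges in `C(X)` and agrees with `g n` on `V n`, so `g n` and `h - g n` are
disjoint; since `T` preserves disjointness, `|T (g n)| ≤ |T h|` and the solid norm gives
`n < ‖T h‖` for every `n`, which is absurd.
-/

open Function

lemma abs_le_abs_add_of_abs_inf_abs_eq_zero_s18 {α : Type*} [Lattice α] [AddCommGroup α]
    [IsOrderedAddMonoid α] {a b : α} (h : |a| ⊓ |b| = 0) : |a| ≤ |a + b| := by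
  have hb : |a| - |a + b| ≤ |b| :=
    sub_le_iff_le_add'.mpr (by simpa using abs_add_le (a + b) (-b))
  exact sub_nonpos.mp (h ▸ le_inf (sub_le_self _ (abs_nonneg _)) hb)

theorem Set.Infinite.exists_pairwise_disjoint_isOpen_inter_nonempty {Y : Type*}
    [TopologicalSpace Y] [CompactSpace Y] [T2Space Y] {s : Set Y} (hs : s.Infinite) :
    ∃ V : ℕ → Set Y, Pairwise (Disjoint on V) ∧ (∀ n, IsOpen (V n)) ∧
      ∀ n, (V n ∩ s).Nonempty := by
  obtain ⟨z, hz⟩ := hs.exists_accPt_principal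
  rw [accPt_iff_nhds] at hz
  -- Inside every open `W ∋ z`, split off an open piece meeting `s` from a smaller open `B ∋ z`.
  have split : ∀ W : {U : Set Y // IsOpen U ∧ z ∈ U},
      ∃ A : Set Y, ∃ B : {U : Set Y // IsOpen U ∧ z ∈ U},
        IsOpen A ∧ A ⊆ W.1 ∧ B.1 ⊆ W.1 ∧ Disjoint A B.1 ∧ (A ∩ s).Nonempty := by
    rintro ⟨W, hW, hzW⟩
    obtain ⟨y, ⟨hyW, hys⟩, hyz⟩ := hz W (hW.mem_nhds hzW)
    obtain ⟨A, B, hA, hB, hyA, hzB, hAB⟩ := t2_separation hyz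
    exact ⟨A ∩ W, ⟨B ∩ W, hB.inter hW, hzB, hzW⟩, hA.inter hW, Set.inter_subset_right,
      Set.inter_subset_right, hAB.mono Set.inter_subset_left Set.inter_subset_left,
      y, ⟨hyA, hyW⟩, hys⟩
  choose A B hA hAW hBW hAB hAs using split
  let W : ℕ → {U : Set Y // IsOpen U ∧ z ∈ U} := fun n => B^[n] ⟨Set.univ, isOpen_univ, trivial⟩
  have hW_succ : ∀ n, W (n + 1) = B (W n) := fun n => iterate_succ_apply' B n _
  have hW_anti : Antitone fun n => (W n).1 :=
    antitone_nat_of_succ_le fun n => (hW_succ n).symm ▸ hBW (W n)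
  refine ⟨fun n => A (W n), (pairwise_disjoint_on _).2 fun m n hmn => ?_, fun n => hA _,
    fun n => hAs _⟩
  exact (hAB (W m)).mono_right <| (hAW (W n)).trans <| hW_succ m ▸ hW_anti hmn

lemma exists_mem_KU_norm_le_lt_norm_apply {Y E : Type*} [TopologicalSpace Y] [CompactSpace Y]
    [NormedAddCommGroup E] [NormedSpace ℝ E] {T : C(Y, ℝ) →ₗ[ℝ] E} {x : Y} (hx : x ∈ SingSet T)
    {U : Set Y} (hU : IsOpen U) (hxU : x ∈ U) {ε : ℝ} (hε : 0 < ε) (M : ℝ) :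
    ∃ f ∈ KU U, ‖f‖ ≤ ε ∧ M < ‖T f‖ := by
  have hunb := hx U hU hxU
  push Not at hunb
  obtain ⟨f, hfU, hf⟩ := hunb (M / ε)
  have hf_pos : 0 < ‖f‖ := norm_pos_iff.mpr (by rintro rfl; simp at hf)
  have hc : 0 ≤ ε / ‖f‖ := by positivity
  refine ⟨(ε / ‖f‖) • f, fun y hy => by simp [hfU y hy], ?_, ?_⟩
  · rw [norm_smul, Real.norm_of_nonneg hc, div_mul_cancel₀ _ hf_pos.ne']
  · rw [map_smul, norm_smul, Real.norm_of_nonneg hc]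
    calc M = ε / ‖f‖ * (M / ε * ‖f‖) := by field_simp
      _ < ε / ‖f‖ * ‖T f‖ := by gcongr

lemma tsum_apply_of_mem_KU {ι Y : Type*} [TopologicalSpace Y] {V : ι → Set Y}
    (hV : Pairwise (Disjoint on V)) {g : ι → C(Y, ℝ)} (hg : Summable g)
    (hgV : ∀ i, g i ∈ KU (V i)) {i : ι} {y : Y}
    (hy : y ∈ V i) : (∑' j, g j) y = g i y := by
  rw [← ContinuousMap.evalCLM_apply ℝ y, (ContinuousMap.evalCLM ℝ y).map_tsum hg]
  exact tsum_eq_single i fun j hj => hgV j y fun hyj => (hV hj).ne_of_mem hyj hy rfl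

lemma mul_tsum_sub_eq_zero_of_mem_KU {ι Y : Type*} [TopologicalSpace Y] {V : ι → Set Y}
    (hV : Pairwise (Disjoint on V)) {g : ι → C(Y, ℝ)} (hg : Summable g)
    (hgV : ∀ i, g i ∈ KU (V i)) (i : ι) : g i * (∑' j, g j - g i) = 0 := by
  ext y
  by_cases hy : y ∈ V i
  · simp [tsum_apply_of_mem_KU hV hg hgV hy]
  · simp [hgV i y hy]

lemma norm_apply_le_of_mul_sub_eq_zero {Y E : Type*} [TopologicalSpace Y] [NormedAddCommGroup E]
    [Lattice E] [HasSolidNorm E] [IsOrderedAddMonoid E] [Module ℝ E] {T : C(Y, ℝ) →ₗ[ℝ] E}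
    (hdp : ∀ f g : C(Y, ℝ), f * g = 0 → |T f| ⊓ |T g| = 0) {f g : C(Y, ℝ)}
    (h : f * (g - f) = 0) : ‖T f‖ ≤ ‖T g‖ := by
  have habs := abs_le_abs_add_of_abs_inf_abs_eq_zero_s18 (hdp _ _ h)
  rw [← map_add, add_sub_cancel] at habs
  exact norm_le_norm_of_abs_le_abs habs

/-- The singularity set of a disjointness preserving operator on `C(X)` is finite. -/
theorem singset_finite (T : C(X, ℝ) →ₗ[ℝ] F)
    (hdp : ∀ f g : C(X, ℝ), f * g = 0 → |T f| ⊓ |T g| = 0) :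
    (SingSet T).Finite := by
  by_contra hinf
  obtain ⟨V, hV, hV_open, hV_sing⟩ :=
    (Set.not_finite.mp hinf).exists_pairwise_disjoint_isOpen_inter_nonempty
  have hbad : ∀ n : ℕ, ∃ g ∈ KU (V n), ‖g‖ ≤ (1 / 2 : ℝ) ^ n ∧ (n : ℝ) < ‖T g‖ := fun n =>
    let ⟨_, hxV, hx⟩ := hV_sing n
    exists_mem_KU_norm_le_lt_norm_apply hx (hV_open n) hxV (by positivity) n
  choose g hgV hg_norm hTg using hbad
  have hg : Summable g := .of_norm_bounded summable_geometric_two hg_norm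
  obtain ⟨n, hn⟩ := exists_nat_ge ‖T (∑' k, g k)‖
  have hle := norm_apply_le_of_mul_sub_eq_zero hdp (mul_tsum_sub_eq_zero_of_mem_KU hV hg hgV n)
  linarith [hTg n]
end
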